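/- (Main equivalence theorem.) Let R be any system with finite Q, C, finite outcome type A, and let C be a well-fitting connection-coupling rule. Then R is C-contextual if and only if its consistification R‡ is contextual in the traditional sense. Moreover, R‡ is always consistently connected. -/
import Mathlib


open scoped ENNReal

/-- Contents of the consistified format: pairs `(q,c)` with `q ≺ c`. -/
def ConsContent {Q C : Type} (rel : Q → C → Prop) := {p : Q × C // rel p.1 p.2}

instance {Q C : Type} [Fintype Q] [Fintype C] (rel : Q → C → Prop)
    [∀ q c, Decidable (rel q c)] : Fintype (ConsContent rel) :=
  inferInstanceAs (Fintype {p : Q × C // rel p.1 p.2})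

/-- The relation of the consistified format: `(q,c) ≺‡ (·,c')` iff `c = c'`,
`(q,c) ≺‡ (q',·)` iff `q = q'`.  Main contexts are `Sum.inl c`, auxiliary
contexts are `Sum.inr q`. -/
def consRel {Q C : Type} (rel : Q → C → Prop) :
    ConsContent rel → (C ⊕ Q) → Prop :=
  fun p => Sum.elim (fun c => p.1.2 = c) (fun q => p.1.1 = q)

instance {Q C : Type} [DecidableEq Q] [DecidableEq C] (rel : Q → C → Prop) :
    ∀ (p : ConsContent rel) (c' : C ⊕ Q), Decidable (consRel rel p c')
  | p, Sum.inl c => inferInstanceAs (Decidable (p.1.2 = c))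
  | p, Sum.inr q => inferInstanceAs (Decidable (p.1.1 = q))

/-- The marginal distribution of content `q` in the bunch of context `c`
(a member of the connection of `q`). -/
noncomputable def connMarg {Q C A : Type} (rel : Q → C → Prop)
    (bunch : ∀ c : C, PMF ({q : Q // rel q c} → A))
    (q : Q) (c : {c : C // rel q c}) : PMF A :=
  (bunch c.1).map (fun f => f ⟨q, c.2⟩)

/-- A well-fitting connection-coupling rule: to every family of one-dimensional
distributions it assigns a *unique* joint distribution (a coupling of the family),
which is the identity coupling whenever all members of the family coincide. -/
structure WellFittingRule (A : Type) : Type 1 where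
  rule : ∀ (ι : Type) [Fintype ι], (ι → PMF A) → PMF (ι → A)
  marg : ∀ (ι : Type) [Fintype ι] (ν : ι → PMF A) (i : ι),
    (rule ι ν).map (fun g => g i) = ν i
  ident : ∀ (ι : Type) [Fintype ι] (ν : ι → PMF A), (∀ i j, ν i = ν j) →
    ∀ g ∈ (rule ι ν).support, ∀ i j : ι, g i = g j

/-- `S` is an overall coupling of the system `(rel, bunch)`: a joint distribution
whose restriction to each context `c` is distributed as the bunch of `c`. -/
def BunchMatch {Q C A : Type} (rel : Q → C → Prop)
    (bunch : ∀ c : C, PMF ({q : Q // rel q c} → A))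
    (S : PMF (ConsContent rel → A)) : Prop :=
  ∀ c : C, S.map (fun f (q : {q : Q // rel q c}) => f ⟨(q.1, c), q.2⟩) = bunch c

/-- Consistent connectedness: variables sharing a content are identically
distributed across contexts. -/
def ConsistentlyConnected {Q C A : Type} (rel : Q → C → Prop)
    (bunch : ∀ c : C, PMF ({q : Q // rel q c} → A)) : Prop :=
  ∀ (q : Q) (c c' : C) (h : rel q c) (h' : rel q c'),
    (bunch c).map (fun f => f ⟨q, h⟩) = (bunch c').map (fun f => f ⟨q, h'⟩)

/-- Traditional noncontextuality: some overall coupling makes every connection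
an identity coupling (its coordinates are almost surely equal). -/
def TradNoncontextual {Q C A : Type} (rel : Q → C → Prop)
    (bunch : ∀ c : C, PMF ({q : Q // rel q c} → A)) : Prop :=
  ∃ S : PMF (ConsContent rel → A), BunchMatch rel bunch S ∧
    ∀ f ∈ S.support, ∀ (q : Q) (c c' : C) (h : rel q c) (h' : rel q c'),
      f ⟨(q, c), h⟩ = f ⟨(q, c'), h'⟩

/-- `C`-noncontextuality: some overall coupling induces on every connection
exactly the coupling prescribed by the rule `W`. -/
def CNoncontextual {Q C A : Type} [Fintype C] (rel : Q → C → Prop)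
    [∀ q c, Decidable (rel q c)]
    (bunch : ∀ c : C, PMF ({q : Q // rel q c} → A))
    (W : WellFittingRule A) : Prop :=
  ∃ S : PMF (ConsContent rel → A), BunchMatch rel bunch S ∧
    ∀ q : Q, S.map (fun f (c : {c : C // rel q c}) => f ⟨(q, c.1), c.2⟩) =
      W.rule {c : C // rel q c} (connMarg rel bunch q)

/-- The bunches of the consistification `R‡`: main bunches `(·,c)` are the
bunches of `R` (with contents relabeled), auxiliary bunches `(q,·)` are
distributed as `C[R_q]`. -/
noncomputable def consBunch {Q C A : Type} [Fintype C] (rel : Q → C → Prop)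
    [∀ q c, Decidable (rel q c)]
    (bunch : ∀ c : C, PMF ({q : Q // rel q c} → A))
    (W : WellFittingRule A) :
    ∀ c' : C ⊕ Q, PMF ({p : ConsContent rel // consRel rel p c'} → A)
  | Sum.inl c => (bunch c).map (fun f p =>
      f ⟨p.1.1.1, Eq.mp (congrArg (rel p.1.1.1) (p.2 : p.1.1.2 = c)) p.1.2⟩)
  | Sum.inr q => (W.rule {c : C // rel q c} (connMarg rel bunch q)).map (fun g p =>
      g ⟨p.1.1.2, Eq.mp (congrArg (fun q' => rel q' p.1.1.2) (p.2 : p.1.1.1 = q)) p.1.2⟩)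

/-- Two pushforwards agree if the functions agree on the support. -/
lemma pmf_map_congr {α β : Type*} (p : PMF α) {f g : α → β}
    (h : ∀ a ∈ p.support, f a = g a) : p.map f = p.map g := by
  ext b
  rw [PMF.map_apply, PMF.map_apply]
  refine tsum_congr fun a => ?_
  by_cases hp : p a = 0
  · simp [hp]
  · rw [h a hp]

lemma pos_equivalence
    {Q C A : Type} [Fintype Q] [Fintype C] [Fintype A]
    [DecidableEq Q] [DecidableEq C]
    (rel : Q → C → Prop) [∀ q c, Decidable (rel q c)]
    (bunch : ∀ c : C, PMF ({q : Q // rel q c} → A))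
    (W : WellFittingRule A) :
    CNoncontextual rel bunch W ↔
      TradNoncontextual (consRel rel) (consBunch rel bunch W) := by
  constructor
  · rintro ⟨S, hB, hW⟩
    refine ⟨S.map (fun f P => f P.1.1), ?_, ?_⟩
    · rintro (c | q)
      · rw [PMF.map_comp]
        show S.map _ = consBunch rel bunch W (Sum.inl c)
        rw [consBunch, ← hB c, PMF.map_comp]
        congr 1
        funext f
        funext P
        obtain ⟨⟨⟨q0, c0⟩, hp⟩, hP⟩ := P
        have e : c0 = c := hP
        subst e
        rfl
      · rw [PMF.map_comp]
        show S.map _ = consBunch rel bunch W (Sum.inr q)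
        rw [consBunch, ← hW q, PMF.map_comp]
        congr 1
        funext f
        funext P
        obtain ⟨⟨⟨q0, c0⟩, hp⟩, hP⟩ := P
        have e : q0 = q := hP
        subst e
        rfl
    · intro F hF
      rw [PMF.support_map] at hF
      obtain ⟨g, -, rfl⟩ := hF
      intro p c c' h h'
      rfl
  · rintro ⟨T, hB, hid⟩
    refine ⟨T.map (fun F p => F ⟨(p, Sum.inl p.1.2), rfl⟩), ?_, ?_⟩
    · intro c
      rw [PMF.map_comp]
      have h1 := hB (Sum.inl c)
      have key : T.map
          (fun F (q : {q : Q // rel q c}) =>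
            F ⟨(⟨(q.1, c), q.2⟩, Sum.inl c), rfl⟩)
          = bunch c := by
        have h2 := congrArg (fun (μ : PMF ({p : ConsContent rel //
            consRel rel p (Sum.inl c)} → A)) =>
          μ.map (fun h (q : {q : Q // rel q c}) =>
            h ⟨⟨(q.1, c), q.2⟩, rfl⟩)) h1
        simp only [PMF.map_comp, consBunch, Function.comp_def] at h2
        exact h2.trans (PMF.map_id (bunch c))
      exact key
    · intro q
      rw [PMF.map_comp]
      have step1 : T.map
          (fun F (cc : {c : C // rel q c}) =>
            F ⟨(⟨(q, cc.1), cc.2⟩, Sum.inl cc.1), rfl⟩)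
          = T.map (fun F (cc : {c : C // rel q c}) =>
            F ⟨(⟨(q, cc.1), cc.2⟩, Sum.inr q), rfl⟩) := by
        apply pmf_map_congr
        intro F hF
        funext cc
        exact hid F hF ⟨(q, cc.1), cc.2⟩ (Sum.inl cc.1) (Sum.inr q) rfl rfl
      have h1 := hB (Sum.inr q)
      have h2 := congrArg (fun (μ : PMF ({p : ConsContent rel //
          consRel rel p (Sum.inr q)} → A)) =>
        μ.map (fun h (cc : {c : C // rel q c}) =>
          h ⟨⟨(q, cc.1), cc.2⟩, rfl⟩)) h1
      simp only [PMF.map_comp, consBunch, Function.comp_def] at h2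
      exact step1.trans (h2.trans (PMF.map_id (W.rule {c : C // rel q c} (connMarg rel bunch q))))

/-- Main equivalence theorem: a system `R` is `C`-contextual iff its
consistification `R‡` is contextual in the traditional sense; moreover `R‡`
is always consistently connected. -/
theorem main_equivalence_theorem
    {Q C A : Type} [Fintype Q] [Fintype C] [Fintype A]
    [DecidableEq Q] [DecidableEq C]
    (rel : Q → C → Prop) [∀ q c, Decidable (rel q c)]
    (bunch : ∀ c : C, PMF ({q : Q // rel q c} → A))
    (W : WellFittingRule A) :
    (¬ CNoncontextual rel bunch W ↔
      ¬ TradNoncontextual (consRel rel) (consBunch rel bunch W)) ∧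
    ConsistentlyConnected (consRel rel) (consBunch rel bunch W) := by
  refine ⟨not_congr (pos_equivalence rel bunch W), ?_⟩
  rintro ⟨⟨q0, c0⟩, hp⟩ (c | q) (c' | q') h h'
  · have e : c = c' := (h : c0 = c).symm.trans h'
    subst e
    rfl
  · have e1 : c0 = c := h
    have e2 : q0 = q' := h'
    subst e1; subst e2
    show (consBunch rel bunch W (Sum.inl c0)).map _ =
      (consBunch rel bunch W (Sum.inr q0)).map _
    rw [consBunch, consBunch, PMF.map_comp, PMF.map_comp]
    exact (W.marg {c : C // rel q0 c} (connMarg rel bunch q0) ⟨c0, hp⟩).symm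
  · have e1 : q0 = q := h
    have e2 : c0 = c' := h'
    subst e1; subst e2
    show (consBunch rel bunch W (Sum.inr q0)).map _ =
      (consBunch rel bunch W (Sum.inl c0)).map _
    rw [consBunch, consBunch, PMF.map_comp, PMF.map_comp]
    exact W.marg {c : C // rel q0 c} (connMarg rel bunch q0) ⟨c0, hp⟩
  · have e : q = q' := (h : q0 = q).symm.trans h'
    subst e
    rfl
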